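/- (Sylvester's law of inertia with a general transformation.) Let H be an n×n Hermitian matrix and S an n×m complex matrix. Then n_-(S* H S) = n_-([H]_{Ran S}) and n_+(S* H S) = n_+([H]_{Ran S}), where Ran S is the column space of S. -/

import Mathlib

open Matrix

/-- A finite simple graph with a chosen orientation of each edge:
`E` is the edge index type, each edge `e` goes from `src e` to `tgt e`. -/
structure OrientedGraph (V E : Type*) where
  src : E → V
  tgt : E → V
  loopless : ∀ e, src e ≠ tgt e
  edgeInj : ∀ e f, (src e = src f ∧ tgt e = tgt f) ∨ (src e = tgt f ∧ tgt e = src f) → e = f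

/-- The underlying simple graph: `r` and `s` are adjacent iff some oriented edge joins them. -/
def OrientedGraph.toSimpleGraph {V E : Type*} (G : OrientedGraph V E) : SimpleGraph V where
  Adj r s := ∃ e, (G.src e = r ∧ G.tgt e = s) ∨ (G.src e = s ∧ G.tgt e = r)
  symm := by
    refine ⟨fun r s h => ?_⟩
    obtain ⟨e, h⟩ := h
    exact ⟨e, h.symm⟩
  loopless := by
    refine ⟨fun r h => ?_⟩
    obtain ⟨e, h⟩ := h
    rcases h with ⟨h1, h2⟩ | ⟨h1, h2⟩ <;> exact G.loopless e (h1.trans h2.symm)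

/-- `H` is strictly supported on `G`: off-diagonal entries are nonzero exactly on edges. -/
def OrientedGraph.StrictSupport {V E : Type*} (G : OrientedGraph V E)
    (H : Matrix V V ℝ) : Prop :=
  ∀ r s, r ≠ s → (H r s ≠ 0 ↔ G.toSimpleGraph.Adj r s)

/-- `H` is supported on `G`: off-diagonal nonzero entries occur only on edges. -/
def OrientedGraph.Support {V E : Type*} (G : OrientedGraph V E)
    (H : Matrix V V ℝ) : Prop :=
  ∀ r s, r ≠ s → H r s ≠ 0 → G.toSimpleGraph.Adj r s

/-- The coboundary map `d : ℝ^V → ℝ^E`, `(dθ)_{(r→s)} = θ_s - θ_r`, as an `E × V` matrix. -/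
def OrientedGraph.cob {V E : Type*} [DecidableEq V] (G : OrientedGraph V E) :
    Matrix E V ℝ :=
  Matrix.of fun e v => (if G.tgt e = v then (1 : ℝ) else 0) - (if G.src e = v then (1 : ℝ) else 0)

/-- The cycle space `Z = ker dᵀ ⊆ ℝ^E`. -/
noncomputable def OrientedGraph.cycleSpace {V E : Type*} [Fintype V] [Fintype E]
    [DecidableEq V] (G : OrientedGraph V E) : Submodule ℝ (E → ℝ) :=
  LinearMap.ker (G.cob)ᵀ.mulVecLin

/-- The diagonal matrix `Φ` on `ℝ^E` with entries `Φ_{(r→s)} = -ψ_r H_{rs} ψ_s`. -/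
noncomputable def PhiMat {V E : Type*} [DecidableEq E] (G : OrientedGraph V E)
    (H : Matrix V V ℝ) (ψ : V → ℝ) : Matrix E E ℝ :=
  Matrix.diagonal fun e => -(ψ (G.src e) * H (G.src e) (G.tgt e) * ψ (G.tgt e))

/-- The nodal count `ν(ψ,H) = #{(r→s) ∈ E : ψ_r H_{rs} ψ_s > 0}`. -/
noncomputable def nodalCount {V E : Type*} (G : OrientedGraph V E)
    (H : Matrix V V ℝ) (ψ : V → ℝ) : ℕ :=
  Nat.card {e : E // 0 < ψ (G.src e) * H (G.src e) (G.tgt e) * ψ (G.tgt e)}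

/-- `C` is a frame for the cycle space: its columns form a basis of `Z`. -/
def IsFrame {V E : Type*} [Fintype V] [Fintype E] [DecidableEq V]
    (G : OrientedGraph V E) {β : ℕ} (C : Matrix E (Fin β) ℝ) : Prop :=
  LinearMap.ker C.mulVecLin = ⊥ ∧ LinearMap.range C.mulVecLin = G.cycleSpace

/-- `n₋(A)`: the number of negative eigenvalues (with multiplicity) of a hermitian matrix. -/
noncomputable def negEig {𝕜 : Type*} [RCLike 𝕜] {m : Type*} [Fintype m] [DecidableEq m]
    (A : Matrix m m 𝕜) : ℕ :=
  if h : A.IsHermitian then Nat.card {i // h.eigenvalues i < 0} else 0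

/-- `n₊(A)`: the number of positive eigenvalues (with multiplicity) of a hermitian matrix. -/
noncomputable def posEig {𝕜 : Type*} [RCLike 𝕜] {m : Type*} [Fintype m] [DecidableEq m]
    (A : Matrix m m 𝕜) : ℕ :=
  if h : A.IsHermitian then Nat.card {i // 0 < h.eigenvalues i} else 0

/-- `n₀(A)`: the number of zero eigenvalues of a hermitian matrix, i.e. `dim ker A`. -/
noncomputable def zeroEig {𝕜 : Type*} [RCLike 𝕜] {m : Type*} [Fintype m] [DecidableEq m]
    (A : Matrix m m 𝕜) : ℕ :=
  Module.finrank 𝕜 (LinearMap.ker A.mulVecLin)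

/-- `n₋([A]_W)`: the Morse index (number of negative eigenvalues) of the compression of
a hermitian matrix `A` to the subspace `W`, i.e. the maximal dimension of a subspace of `W`
on which the hermitian form of `A` is negative definite. -/
noncomputable def negIndexOn {𝕜 : Type*} [RCLike 𝕜] {m : Type*} [Fintype m]
    (A : Matrix m m 𝕜) (W : Submodule 𝕜 (m → 𝕜)) : ℕ :=
  sSup {k : ℕ | ∃ U : Submodule 𝕜 (m → 𝕜), U ≤ W ∧ Module.finrank 𝕜 U = k ∧
    ∀ x ∈ U, x ≠ 0 → RCLike.re (star x ⬝ᵥ A.mulVec x) < 0}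

/-- `n₊([A]_W)`: the number of positive eigenvalues of the compression of a hermitian
matrix `A` to the subspace `W`. -/
noncomputable def posIndexOn {𝕜 : Type*} [RCLike 𝕜] {m : Type*} [Fintype m]
    (A : Matrix m m 𝕜) (W : Submodule 𝕜 (m → 𝕜)) : ℕ :=
  sSup {k : ℕ | ∃ U : Submodule 𝕜 (m → 𝕜), U ≤ W ∧ Module.finrank 𝕜 U = k ∧
    ∀ x ∈ U, x ≠ 0 → 0 < RCLike.re (star x ⬝ᵥ A.mulVec x)}

/-- The linear functional `x ↦ v ⬝ᵥ x`. -/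
noncomputable def dotLeft {𝕜 : Type*} [RCLike 𝕜] {m : Type*} [Fintype m] (v : m → 𝕜) :
    (m → 𝕜) →ₗ[𝕜] 𝕜 where
  toFun x := v ⬝ᵥ x
  map_add' x y := by simp [dotProduct_add]
  map_smul' c x := by simp [dotProduct_smul]

/-- `n₀([A]_W)`: the dimension of the kernel of the compression of `A` to `W`,
i.e. of `{x ∈ W : Ax ⊥ W}`. -/
noncomputable def zeroIndexOn {𝕜 : Type*} [RCLike 𝕜] {m : Type*} [Fintype m]
    (A : Matrix m m 𝕜) (W : Submodule 𝕜 (m → 𝕜)) : ℕ :=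
  Module.finrank 𝕜
    ↥(W ⊓ ⨅ y : W, LinearMap.ker ((dotLeft (star (y : m → 𝕜))).comp A.mulVecLin))

/-- Extension of `α ∈ ℝ^E` to an antisymmetric function on pairs of vertices:
`α_{rs} = α_e` if `e = (r→s) ∈ E`, `α_{rs} = -α_e` if `e = (s→r) ∈ E`, and `0` otherwise. -/
noncomputable def alphaExt {V E : Type*} [Fintype E] [DecidableEq V]
    (G : OrientedGraph V E) (α : E → ℝ) (r s : V) : ℝ :=
  ∑ e : E, ((if G.src e = r ∧ G.tgt e = s then α e else 0) -
            (if G.src e = s ∧ G.tgt e = r then α e else 0))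

/-- The phase-perturbed matrix `H_α` with `(H_α)_{rs} = e^{iα_{rs}} H_{rs}` for `r ≠ s`. -/
noncomputable def phaseMat {V E : Type*} [Fintype E] [DecidableEq V]
    (G : OrientedGraph V E) (H : Matrix V V ℝ) (α : E → ℝ) : Matrix V V ℂ :=
  Matrix.of fun r s =>
    if r = s then (H r r : ℂ)
    else Complex.exp (Complex.I * (alphaExt G α r s : ℂ)) * (H r s : ℂ)

/-!
For a Hermitian matrix `A`, `n₊(A)` is the maximal dimension of a subspace on which the form
`x ↦ Re (x* A x)` is positive definite: in an eigenbasis the form is `∑ λᵢ ‖yᵢ‖²`, so the span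
of the eigenvectors with `λᵢ > 0` is such a subspace, and any such subspace meets the span of the
other eigenvectors trivially. The form of `Sᴴ H S` is the form of `H` composed with `S`, so
`x ↦ S x` maps positive definite subspaces for `Sᴴ H S` injectively to positive definite
subspaces for `H` inside `Ran S`, and a right inverse of `S` on `Ran S` maps them back.
For `n₋` the same applies to the form `-Re (x* A x)`.
-/

section DefiniteSubspaces

open Module LinearMap

variable {𝕜 M ι : Type*} [RCLike 𝕜] [AddCommGroup M] [Module 𝕜 M] [Fintype ι]

def posDefDims (Q : M → ℝ) (W : Submodule 𝕜 M) : Set ℕ :=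
  {k | ∃ U : Submodule 𝕜 M, U ≤ W ∧ finrank 𝕜 U = k ∧ ∀ x ∈ U, x ≠ 0 → 0 < Q x}

section Coordinates

variable (e : M ≃ₗ[𝕜] (ι → 𝕜)) (J : Set ι)

def vanishingCoords : Submodule 𝕜 M :=
  (⨅ i ∈ J, ker (proj i : (ι → 𝕜) →ₗ[𝕜] 𝕜)).comap (e : M →ₗ[𝕜] ι → 𝕜)

omit [Fintype ι] in
theorem mem_vanishingCoords {x : M} : x ∈ vanishingCoords e J ↔ ∀ i ∈ J, e x i = 0 := by
  simp [vanishingCoords]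

theorem finrank_vanishingCoords : finrank 𝕜 (vanishingCoords e J) = Nat.card ↥Jᶜ := by
  classical
  rw [vanishingCoords, Submodule.comap_equiv_eq_map_symm, LinearEquiv.finrank_map_eq,
    (iInfKerProjEquiv 𝕜 (fun _ ↦ 𝕜) disjoint_compl_left (by simp)).finrank_eq,
    finrank_fintype_fun_eq_card, Nat.card_eq_fintype_card]

end Coordinates

theorem sum_mul_norm_sq_pos {μ : ι → ℝ} {y : ι → 𝕜} (hy : y ≠ 0)
    (hμ : ∀ i, y i ≠ 0 → 0 < μ i) : 0 < ∑ i, μ i * ‖y i‖ ^ 2 := by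
  obtain ⟨j, hj⟩ := Function.ne_iff.1 hy
  refine Finset.sum_pos' (fun i _ => ?_) ⟨j, Finset.mem_univ j, by have := hμ j hj; positivity⟩
  by_cases hi : y i = 0
  · simp [hi]
  · have := hμ i hi
    positivity

theorem sum_mul_norm_sq_nonpos {μ : ι → ℝ} {y : ι → 𝕜}
    (hμ : ∀ i, 0 < μ i → y i = 0) : ∑ i, μ i * ‖y i‖ ^ 2 ≤ 0 := by
  refine Finset.sum_nonpos fun i _ => ?_
  by_cases hi : 0 < μ i
  · simp [hμ i hi]
  · exact mul_nonpos_of_nonpos_of_nonneg (not_lt.1 hi) (sq_nonneg _)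

section WeightedSumOfSquares

variable {Q : M → ℝ} (e : M ≃ₗ[𝕜] (ι → 𝕜)) {μ : ι → ℝ}
  (hQ : ∀ x, Q x = ∑ i, μ i * ‖e x i‖ ^ 2)
include hQ

theorem card_pos_mem_posDefDims :
    Nat.card {i // 0 < μ i} ∈ posDefDims Q (⊤ : Submodule 𝕜 M) := by
  refine ⟨vanishingCoords e {i | 0 < μ i}ᶜ, le_top, ?_, fun x hx hx0 => ?_⟩
  · rw [finrank_vanishingCoords, compl_compl]
    rfl
  · rw [hQ]
    refine sum_mul_norm_sq_pos (by simpa using hx0) fun i hi => ?_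
    by_contra h
    exact hi ((mem_vanishingCoords e _).1 hx i h)

theorem le_card_pos_of_mem_posDefDims {k : ℕ} (hk : k ∈ posDefDims Q (⊤ : Submodule 𝕜 M)) :
    k ≤ Nat.card {i // 0 < μ i} := by
  obtain ⟨U, -, rfl, hU⟩ := hk
  have hdisj : Disjoint U (vanishingCoords e {i | 0 < μ i}) := by
    refine Submodule.disjoint_def.2 fun x hxU hxP => by_contra fun hx0 => ?_
    have := hU x hxU hx0
    rw [hQ] at this
    exact this.not_ge (sum_mul_norm_sq_nonpos ((mem_vanishingCoords e _).1 hxP))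
  have := e.symm.finiteDimensional
  have hdim := Submodule.finrank_add_finrank_le_of_disjoint hdisj
  rw [e.finrank_eq, finrank_fintype_fun_eq_card, finrank_vanishingCoords,
    ← Nat.card_eq_fintype_card] at hdim
  have hcard := Set.ncard_add_ncard_compl {i | 0 < μ i}
  rw [← Nat.card_coe_set_eq, ← Nat.card_coe_set_eq] at hcard
  change _ ≤ Nat.card ↥{i | 0 < μ i}
  omega

theorem isGreatest_posDefDims_top :
    IsGreatest (posDefDims Q (⊤ : Submodule 𝕜 M)) (Nat.card {i // 0 < μ i}) :=
  ⟨card_pos_mem_posDefDims e hQ, fun _ hk => le_card_pos_of_mem_posDefDims e hQ hk⟩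

end WeightedSumOfSquares

section Pullback

variable {N : Type*} [AddCommGroup N] [Module 𝕜 N] {Q : N → ℝ} (f : M →ₗ[𝕜] N)

theorem posDefDims_comp_subset (hQ0 : Q 0 ≤ 0) :
    posDefDims (Q ∘ f) (⊤ : Submodule 𝕜 M) ⊆ posDefDims Q (range f) := by
  rintro _ ⟨U, -, rfl, hU⟩
  have hinj : Function.Injective (f.domRestrict U) := by
    refine (injective_iff_map_eq_zero _).2 fun x hx => by_contra fun hx0 => ?_
    have hfx : f x = 0 := hx
    exact (hU x x.2 (by simpa using hx0)).not_ge (by rwa [Function.comp_apply, hfx])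
  refine ⟨U.map f, map_le_range, ?_, ?_⟩
  · rw [← range_domRestrict, (LinearEquiv.ofInjective _ hinj).finrank_eq]
  · rintro _ ⟨x, hx, rfl⟩ hx0
    exact hU x hx (by rintro rfl; exact hx0 f.map_zero)

theorem posDefDims_subset_comp :
    posDefDims Q (range f) ⊆ posDefDims (Q ∘ f) (⊤ : Submodule 𝕜 M) := by
  rintro _ ⟨U', hU', rfl, hU⟩
  obtain ⟨g, hg⟩ := f.rangeRestrict.exists_rightInverse_of_surjective f.range_rangeRestrict
  have hfg (w : range f) : f (g w) = w := congrArg Subtype.val (LinearMap.congr_fun hg w)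
  have hginj : Function.Injective g := fun a b hab => by
    simpa [hfg] using congrArg f hab
  refine ⟨(U'.comap (range f).subtype).map g, le_top, ?_, ?_⟩
  · rw [← (Submodule.equivMapOfInjective g hginj _).finrank_eq,
      (Submodule.comapSubtypeEquivOfLe hU').finrank_eq]
  · rintro _ ⟨w, hw, rfl⟩ hw0
    simp only [Function.comp_apply, hfg]
    exact hU w hw fun h => hw0 (by rw [show w = 0 from Subtype.ext h, map_zero])

theorem posDefDims_comp (hQ0 : Q 0 ≤ 0) :
    posDefDims (Q ∘ f) (⊤ : Submodule 𝕜 M) = posDefDims Q (range f) :=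
  (posDefDims_comp_subset f hQ0).antisymm (posDefDims_subset_comp f)

end Pullback

end DefiniteSubspaces

section HermitianForm

variable {𝕜 m : Type*} [RCLike 𝕜] [Fintype m]

def hermForm (A : Matrix m m 𝕜) (x : m → 𝕜) : ℝ := RCLike.re (star x ⬝ᵥ A *ᵥ x)

theorem posIndexOn_eq_sSup (A : Matrix m m 𝕜) (W : Submodule 𝕜 (m → 𝕜)) :
    posIndexOn A W = sSup (posDefDims (hermForm A) W) := rfl

theorem negIndexOn_eq_sSup (A : Matrix m m 𝕜) (W : Submodule 𝕜 (m → 𝕜)) :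
    negIndexOn A W = sSup (posDefDims (-hermForm A) W) := by
  simp [negIndexOn, posDefDims, hermForm]

theorem hermForm_conjTranspose_mul_mul {n : Type*} [Fintype n] (H : Matrix n n 𝕜)
    (S : Matrix n m 𝕜) : hermForm (Sᴴ * H * S) = hermForm H ∘ S.mulVecLin := by
  ext x
  simp only [hermForm, Function.comp_apply, mulVecLin_apply, ← mulVec_mulVec,
    dotProduct_mulVec (star x), star_mulVec]

variable [DecidableEq m] {A : Matrix m m 𝕜} (hA : A.IsHermitian)
include hA

theorem Matrix.IsHermitian.hermForm_eq_sum (x : m → 𝕜) :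
    hermForm A x = ∑ i, hA.eigenvalues i *
      ‖UnitaryGroup.toLinearEquiv (star hA.eigenvectorUnitary) x i‖ ^ 2 := by
  set y := star (hA.eigenvectorUnitary : Matrix m m 𝕜) *ᵥ x
  have hx : star x ⬝ᵥ A *ᵥ x =
      star y ⬝ᵥ diagonal (RCLike.ofReal ∘ hA.eigenvalues) *ᵥ y := by
    conv_lhs => rw [hA.spectral_theorem, Unitary.conjStarAlgAut_apply]
    rw [← mulVec_mulVec, ← mulVec_mulVec, dotProduct_mulVec, star_mulVec,
      ← star_eq_conjTranspose, star_star]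
  rw [hermForm, hx, dotProduct, map_sum]
  refine Finset.sum_congr rfl fun i _ => ?_
  rw [mulVec_diagonal, Function.comp_apply, Pi.star_apply, RCLike.star_def, mul_left_comm,
    RCLike.conj_mul]
  norm_cast

theorem Matrix.IsHermitian.posEig_eq_sSup :
    posEig A = sSup (posDefDims (hermForm A) (⊤ : Submodule 𝕜 (m → 𝕜))) := by
  rw [posEig, dif_pos hA, (isGreatest_posDefDims_top _ hA.hermForm_eq_sum).csSup_eq]

theorem Matrix.IsHermitian.negEig_eq_sSup :
    negEig A = sSup (posDefDims (-hermForm A) (⊤ : Submodule 𝕜 (m → 𝕜))) := by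
  have hQ (x : m → 𝕜) : (-hermForm A) x = ∑ i, -hA.eigenvalues i *
      ‖UnitaryGroup.toLinearEquiv (star hA.eigenvectorUnitary) x i‖ ^ 2 := by
    simp [hA.hermForm_eq_sum x]
  simp_rw [negEig, dif_pos hA, (isGreatest_posDefDims_top _ hQ).csSup_eq, neg_pos]

end HermitianForm

theorem sylvester_general_transformation_general
    {n m : Type*} [Fintype n] [Fintype m] [DecidableEq m]
    (H : Matrix n n ℂ) (hH : H.IsHermitian) (S : Matrix n m ℂ) :
    negEig (Sᴴ * H * S) = negIndexOn H (LinearMap.range S.mulVecLin) ∧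
    posEig (Sᴴ * H * S) = posIndexOn H (LinearMap.range S.mulVecLin) := by
  have hA : (Sᴴ * H * S).IsHermitian := isHermitian_conjTranspose_mul_mul S hH
  have hform := hermForm_conjTranspose_mul_mul H S
  constructor
  · rw [hA.negEig_eq_sSup, negIndexOn_eq_sSup, hform, ← Pi.neg_comp,
      posDefDims_comp _ (by simp [hermForm])]
  · rw [hA.posEig_eq_sSup, posIndexOn_eq_sSup, hform, posDefDims_comp _ (by simp [hermForm])]

/-- Sylvester's law of inertia with a general transformation:
`n₋(Sᴴ H S) = n₋([H]_{Ran S})` and `n₊(Sᴴ H S) = n₊([H]_{Ran S})`. -/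
theorem sylvester_general_transformation
    {n m : Type*} [Fintype n] [Fintype m] [DecidableEq n] [DecidableEq m]
    (H : Matrix n n ℂ) (hH : H.IsHermitian) (S : Matrix n m ℂ) :
    negEig (Sᴴ * H * S) = negIndexOn H (LinearMap.range S.mulVecLin) ∧
    posEig (Sᴴ * H * S) = posIndexOn H (LinearMap.range S.mulVecLin) :=
  sylvester_general_transformation_general H hH S
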